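/- Let p, q be nonzero reals and s > 0. If the function (A,B) ↦ ‖(A^{p/2}B^q A^{p/2})^s‖_∞ is jointly convex on pairs of positive definite n×n matrices, then for every pair of positive definite n×n matrices A, B one has ((A^{1/q}+B^{1/q})/2)^q ≤ ((A^{-1/p}+B^{-1/p})/2)^{-p} in the Loewner order. -/

import Mathlib

open Matrix
open scoped ComplexOrder

/-- Real power of a Hermitian matrix via the spectral theorem (junk value `0` on
non-Hermitian input). -/
noncomputable def mpow {n : Type*} [Fintype n] [DecidableEq n] (A : Matrix n n ℂ) (p : ℝ) :
    Matrix n n ℂ :=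
  if hA : A.IsHermitian then
    (hA.eigenvectorUnitary : Matrix n n ℂ) *
      Matrix.diagonal (fun i => ((hA.eigenvalues i ^ p : ℝ) : ℂ)) *
      star (hA.eigenvectorUnitary : Matrix n n ℂ)
  else 0

/-- Loewner order: `loewner A B` iff `B - A` is positive semidefinite. -/
def loewner {n : Type*} [Fintype n] (A B : Matrix n n ℂ) : Prop := (B - A).PosSemidef

/-- Smallest eigenvalue of a Hermitian matrix (junk value `0` on non-Hermitian input). -/
noncomputable def lambdaMin {n : Type*} [Fintype n] [DecidableEq n] (A : Matrix n n ℂ) : ℝ :=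
  if hA : A.IsHermitian then ⨅ i, hA.eigenvalues i else 0

/-- Largest eigenvalue of a Hermitian matrix; for positive definite `A` this is the
operator norm `‖A‖∞` (junk value `0` on non-Hermitian input). -/
noncomputable def lambdaMax {n : Type*} [Fintype n] [DecidableEq n] (A : Matrix n n ℂ) : ℝ :=
  if hA : A.IsHermitian then ⨆ i, hA.eigenvalues i else 0

/-- The `j`-th smallest eigenvalue (counted with multiplicity, increasing order)
of a Hermitian matrix. -/
noncomputable def eigUp {k : ℕ} (A : Matrix (Fin k) (Fin k) ℂ) (j : Fin k) : ℝ :=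
  if hA : A.IsHermitian then (hA.eigenvalues ∘ Tuple.sort hA.eigenvalues) j else 0

/-- The `j`-th largest eigenvalue of a Hermitian matrix. -/
noncomputable def eigDown {k : ℕ} (A : Matrix (Fin k) (Fin k) ℂ) (j : Fin k) : ℝ :=
  eigUp A j.rev

/-!
At a pair `(M^{-1/p}, M^{1/q})` the sandwich `(M^{-1/p})^{p/2} M (M^{-1/p})^{p/2}` is the identity,
so the convex function is at most `1` there. At the midpoint `(C, D)` of two such pairs convexity
gives `‖(C^{p/2} D^q C^{p/2})^s‖∞ ≤ 1`, i.e. `C^{p/2} D^q C^{p/2} ≤ 1`, and conjugating by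
`C^{-p/2}` turns this into `D^q ≤ C^{-p}`.
-/

open scoped MatrixOrder

namespace CFC

variable {A : Type*} [PartialOrder A] [Ring A] [StarRing A] [TopologicalSpace A]
  [StarOrderedRing A] [Algebra ℝ A] [ContinuousFunctionalCalculus ℝ A IsSelfAdjoint]
  [NonnegSpectrumClass ℝ A]

lemma le_rpow_neg_of_rpow_half_conj_le_one {c d : A} (hc : IsStrictlyPositive c) (p : ℝ)
    (h : c ^ (p / 2) * d * c ^ (p / 2) ≤ 1) : d ≤ c ^ (-p) := by
  have hconj := (rpow_nonneg (a := c) (y := -(p / 2))).isSelfAdjoint.conjugate_le_conjugate h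
  have hd : c ^ (-(p / 2)) * (c ^ (p / 2) * d * c ^ (p / 2)) * c ^ (-(p / 2)) = d := by
    simp only [← mul_assoc, rpow_neg_mul_rpow (p / 2) hc, one_mul]
    rw [mul_assoc, rpow_mul_rpow_neg (p / 2) hc, mul_one]
  rwa [hd, mul_one, ← rpow_add hc.isUnit, ← neg_add, add_halves] at hconj

variable [IsSemitopologicalRing A] [T2Space A]

lemma rpow_rpow_conj_rpow_rpow_eq_one {a : A} (ha : IsStrictlyPositive a) {p q : ℝ}
    (hp : p ≠ 0) (hq : q ≠ 0) :
    (a ^ (-1 / p)) ^ (p / 2) * (a ^ (1 / q)) ^ q * (a ^ (-1 / p)) ^ (p / 2) = 1 := by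
  rw [rpow_rpow a _ _ (div_ne_zero (by norm_num) hp), rpow_rpow a _ _ (one_div_ne_zero hq),
    one_div_mul_cancel hq, ← rpow_add ha.isUnit, ← rpow_add ha.isUnit,
    show -1 / p * (p / 2) + 1 + -1 / p * (p / 2) = 0 by field_simp; ring, rpow_zero a]

end CFC

open CFC

section

variable {n : Type*} [Fintype n] [DecidableEq n]

lemma mpow_eq_cfc {A : Matrix n n ℂ} (hA : A.IsHermitian) (r : ℝ) :
    mpow A r = cfc (fun x : ℝ => x ^ r) A := by
  rw [hA.cfc_eq, mpow, dif_pos hA]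
  rfl

lemma mpow_eq_rpow {A : Matrix n n ℂ} (hA : 0 ≤ A) (r : ℝ) : mpow A r = A ^ r := by
  rw [mpow_eq_cfc hA.posSemidef.isHermitian, rpow_eq_cfc_real hA]

lemma Matrix.PosDef.mpow {A : Matrix n n ℂ} (hA : A.PosDef) (r : ℝ) : (mpow A r).PosDef := by
  rw [mpow_eq_rpow hA.posSemidef.nonneg]
  exact (IsStrictlyPositive.rpow A r hA.isStrictlyPositive).posDef

lemma le_lambdaMax {A : Matrix n n ℂ} (hA : A.IsHermitian) {x : ℝ} (hx : x ∈ spectrum ℝ A) :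
    x ≤ lambdaMax A := by
  rw [hA.spectrum_real_eq_range_eigenvalues] at hx
  obtain ⟨i, rfl⟩ := hx
  rw [lambdaMax, dif_pos hA]
  exact le_ciSup (Set.finite_range _).bddAbove i

lemma lambdaMax_one_le : lambdaMax (1 : Matrix n n ℂ) ≤ 1 := by
  rw [lambdaMax, dif_pos isHermitian_one]
  refine Real.iSup_le (fun i => ?_) zero_le_one
  have hi := isHermitian_one (n := n) (α := ℂ) |>.eigenvalues_mem_spectrum_real i
  have : Nonempty n := ⟨i⟩
  rw [spectrum.one_eq, Set.mem_singleton_iff] at hi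
  exact hi.le

lemma le_one_of_lambdaMax_mpow_le_one {X : Matrix n n ℂ} (hX : X.IsHermitian) {s : ℝ}
    (hs : 0 < s) (h : lambdaMax (mpow X s) ≤ 1) : X ≤ 1 := by
  have hXs : (mpow X s).IsHermitian := mpow_eq_cfc hX s ▸ cfc_predicate (fun x : ℝ => x ^ s) X
  rw [CFC.le_one_iff (R := ℝ) X hX]
  intro x hx
  by_contra! hx1
  have hmem : x ^ s ∈ spectrum ℝ (mpow X s) := by
    have hspec := cfc_map_spectrum (fun x : ℝ => x ^ s) X hX
      (Real.continuous_rpow_const hs.le).continuousOn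
    rw [mpow_eq_cfc hX, hspec]
    exact ⟨x, hx, rfl⟩
  exact (Real.one_lt_rpow hx1 hs).not_ge ((le_lambdaMax hXs hmem).trans h)

noncomputable def sandwichNorm (p q s : ℝ) (AB : Matrix n n ℂ × Matrix n n ℂ) : ℝ :=
  lambdaMax (mpow (mpow AB.1 (p/2) * mpow AB.2 q * mpow AB.1 (p/2)) s)

lemma sandwichNorm_mpow_pair_le_one {M : Matrix n n ℂ} (hM : M.PosDef) {p q : ℝ} (hp : p ≠ 0)
    (hq : q ≠ 0) (s : ℝ) : sandwichNorm p q s (mpow M (-1/p), mpow M (1/q)) ≤ 1 := by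
  rw [sandwichNorm, mpow_eq_rpow hM.posSemidef.nonneg, mpow_eq_rpow hM.posSemidef.nonneg,
    mpow_eq_rpow (rpow_nonneg (a := M)), mpow_eq_rpow (rpow_nonneg (a := M)),
    rpow_rpow_conj_rpow_rpow_eq_one hM.isStrictlyPositive hp hq,
    mpow_eq_rpow PosSemidef.one.nonneg, one_rpow]
  exact lambdaMax_one_le

lemma loewner_mpow_of_sandwichNorm_le_one {C D : Matrix n n ℂ} (hC : C.PosDef)
    (hD : D.PosSemidef) {p q s : ℝ} (hs : 0 < s) (h : sandwichNorm p q s (C, D) ≤ 1) :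
    loewner (mpow D q) (mpow C (-p)) := by
  rw [sandwichNorm, mpow_eq_rpow hC.posSemidef.nonneg, mpow_eq_rpow hD.nonneg] at h
  rw [loewner, ← Matrix.le_iff, mpow_eq_rpow hC.posSemidef.nonneg, mpow_eq_rpow hD.nonneg]
  have hX : (C ^ (p/2) * D ^ q * C ^ (p/2)).IsHermitian :=
    rpow_nonneg.isSelfAdjoint.conjugate_self rpow_nonneg.isSelfAdjoint
  exact le_rpow_neg_of_rpow_half_conj_le_one hC.isStrictlyPositive p
    (le_one_of_lambdaMax_mpow_le_one hX hs h)

end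

/-- Lemma 5.3: if `p, q ≠ 0`, `s > 0` and `(A,B) ↦ ‖(A^{p/2} B^q A^{p/2})^s‖∞` is jointly
convex on positive definite pairs, then
`((A^{1/q}+B^{1/q})/2)^q ≤ ((A^{-1/p}+B^{-1/p})/2)^{-p}` for all positive definite `A, B`. -/
theorem stmt12 {n : Type*} [Fintype n] [DecidableEq n]
    (p q s : ℝ) (hp : p ≠ 0) (hq : q ≠ 0) (hs : 0 < s)
    (h : ConvexOn ℝ {AB : Matrix n n ℂ × Matrix n n ℂ | AB.1.PosDef ∧ AB.2.PosDef}
      (fun AB => lambdaMax (mpow (mpow AB.1 (p/2) * mpow AB.2 q * mpow AB.1 (p/2)) s)))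
    (A B : Matrix n n ℂ) (hA : A.PosDef) (hB : B.PosDef) :
    loewner (mpow ((1/2 : ℝ) • (mpow A (1/q) + mpow B (1/q))) q)
      (mpow ((1/2 : ℝ) • (mpow A (-1/p) + mpow B (-1/p))) (-p)) := by
  have hconv : ConvexOn ℝ {AB : Matrix n n ℂ × Matrix n n ℂ | AB.1.PosDef ∧ AB.2.PosDef}
      (sandwichNorm p q s) := h
  have hmid := hconv.2 (x := (mpow A (-1/p), mpow A (1/q))) (y := (mpow B (-1/p), mpow B (1/q)))
    ⟨hA.mpow _, hA.mpow _⟩ ⟨hB.mpow _, hB.mpow _⟩ (by norm_num : (0 : ℝ) ≤ 1/2) (by norm_num)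
    (add_halves 1)
  simp only [Prod.smul_mk, Prod.mk_add_mk, ← smul_add, smul_eq_mul] at hmid
  have hA_le := sandwichNorm_mpow_pair_le_one hA hp hq s
  have hB_le := sandwichNorm_mpow_pair_le_one hB hp hq s
  exact loewner_mpow_of_sandwichNorm_le_one (((hA.mpow _).add (hB.mpow _)).smul one_half_pos)
    (((hA.mpow _).add (hB.mpow _)).smul one_half_pos).posSemidef hs (by linarith)
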